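/- Let \delta > 0 and let \lambda : \mathbb{N} \to \mathbb{R} satisfy \lambda_n \geq \delta for all n, and suppose that F(t) := \sum_{n} e^{-t\lambda_n} is finite for every t > 0. Assume there are real constants C_1, C_2, C_3, M such that |F(t) - C_1/t - C_2 t^{-1/2} - C_3| \leq M t^{1/2} for all t \in (0,1]. Then: (i) the series \zeta_\lambda(s) = \sum_n \lambda_n^{-s} converges for every complex s with Re(s) > 1; (ii) there exists a function G : \mathbb{C} \to \mathbb{C} which is complex-differentiable at every point of the set \{s : Re(s) > -1/2\} \setminus \{1/2, 1\}, agrees with \zeta_\lambda(s) whenever Re(s) > 1, and satisfies G(0) = C_3. In particular \zeta_\lambda extends holomorphically to a neighborhood of 0, so the height -G'(0) is well defined. -/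

import Mathlib

open Real Complex Set MeasureTheory Filter Asymptotics Topology

/-!
For `Re s > 1` the Mellin transform of the heat trace `F` is `Γ(s) ζ_λ(s)`. Split `F = E + R` with
`E = 𝟙_(0,1] (C₁ / t + C₂ t^(-1/2) + C₃)`, whose Mellin transform is
`C₁ / (s - 1) + C₂ / (s - 1/2) + C₃ / s`. The remainder `R` is `O(t^(1/2))` at `0` and
`O(e^(-δ t))` at `∞`, so its Mellin transform is holomorphic on `Re s > -1/2`, and
`ζ_λ(s) = (𝓜R(s) + C₁ / (s - 1) + C₂ / (s - 1/2)) / Γ(s) + C₃ / Γ(s + 1)`.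
Since `1 / Γ` is entire and vanishes at `0`, the right-hand side continues `ζ_λ` and equals
`C₃` there.
Convergence of `∑ λₙ^(-σ)` for `σ > 1` comes from the same splitting: the Mellin integral of `F`
converges at `σ` and dominates every partial sum of `∑ Γ(σ) λₙ^(-σ)`.
-/

noncomputable section

theorem summable_integral_of_integrable_tsum {α : Type*} [MeasurableSpace α] {μ : Measure α}
    {f : ℕ → α → ℝ} (hf_nonneg : ∀ n, 0 ≤ᵐ[μ] f n) (hf_int : ∀ n, Integrable (f n) μ)
    (hf_sum : ∀ᵐ x ∂μ, Summable fun n => f n x) (h_int : Integrable (fun x => ∑' n, f n x) μ) :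
    Summable fun n => ∫ x, f n x ∂μ := by
  refine summable_of_sum_le (c := ∫ x, ∑' n, f n x ∂μ)
    (fun n => integral_nonneg_of_ae (hf_nonneg n)) fun u => ?_
  rw [← integral_finsetSum u fun n _ => hf_int n]
  refine integral_mono_ae (integrable_finsetSum u fun n _ => hf_int n) h_int ?_
  filter_upwards [ae_all_iff.2 hf_nonneg, hf_sum] with x hx hx_sum
  exact hx_sum.sum_le_tsum u fun n _ => hx n

theorem HasMellin.add {E : Type*} [NormedAddCommGroup E] [NormedSpace ℂ E] {f g : ℝ → E} {s : ℂ}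
    {a b : E} (hf : HasMellin f s a) (hg : HasMellin g s b) :
    HasMellin (fun t => f t + g t) s (a + b) :=
  hf.2 ▸ hg.2 ▸ hasMellin_add hf.1 hg.1

theorem HasMellin.const_mul {f : ℝ → ℂ} {s a : ℂ} (hf : HasMellin f s a) (c : ℂ) :
    HasMellin (fun t => c * f t) s (c * a) :=
  hf.2 ▸ hasMellin_const_smul hf.1 c

theorem LocallyIntegrableOn.ofReal {X : Type*} [MeasurableSpace X] [TopologicalSpace X]
    {μ : Measure X} {f : X → ℝ} {s : Set X} (hf : LocallyIntegrableOn f s μ) :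
    LocallyIntegrableOn (fun x => (f x : ℂ)) s μ := fun x hx =>
  let ⟨t, ht, hint⟩ := hf x hx
  ⟨t, ht, hint.ofReal⟩

def heatTrace (lam : ℕ → ℝ) (t : ℝ) : ℝ := ∑' n, Real.exp (-t * lam n)

section HeatTrace

variable {lam : ℕ → ℝ}

theorem heatTrace_nonneg (lam : ℕ → ℝ) (t : ℝ) : 0 ≤ heatTrace lam t :=
  tsum_nonneg fun _ => (exp_pos _).le

theorem heatTrace_antitoneOn (hlam : ∀ n, 0 ≤ lam n)
    (hsum : ∀ t, 0 < t → Summable fun n => Real.exp (-t * lam n)) :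
    AntitoneOn (heatTrace lam) (Ioi 0) := fun a ha b hb hab =>
  (hsum b hb).tsum_le_tsum (fun n => exp_le_exp.2 (by nlinarith [hlam n])) (hsum a ha)

theorem heatTrace_le_mul_exp {δ t₀ t : ℝ} (hlam : ∀ n, δ ≤ lam n)
    (hsum : Summable fun n => Real.exp (-t₀ * lam n)) (ht : t₀ ≤ t) :
    heatTrace lam t ≤ heatTrace lam t₀ * Real.exp (-δ * (t - t₀)) := by
  have hterm : ∀ n, Real.exp (-t * lam n) ≤ Real.exp (-t₀ * lam n) * Real.exp (-δ * (t - t₀)) :=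
    fun n => by
      rw [← Real.exp_add, exp_le_exp]
      nlinarith [mul_le_mul_of_nonneg_left (hlam n) (sub_nonneg.2 ht)]
  have hsum' := hsum.mul_right (Real.exp (-δ * (t - t₀)))
  calc heatTrace lam t
      ≤ ∑' n, Real.exp (-t₀ * lam n) * Real.exp (-δ * (t - t₀)) :=
        (hsum'.of_nonneg_of_le (fun _ => (exp_pos _).le) hterm).tsum_le_tsum hterm hsum'
    _ = _ := tsum_mul_right

theorem heatTrace_isBigO_atTop {δ : ℝ} (hlam : ∀ n, δ ≤ lam n)
    (hsum : Summable fun n => Real.exp (-1 * lam n)) :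
    heatTrace lam =O[atTop] fun t => Real.exp (-δ * t) := by
  refine IsBigO.of_bound (heatTrace lam 1 * Real.exp δ) ?_
  filter_upwards [eventually_ge_atTop 1] with t ht
  rw [norm_of_nonneg (heatTrace_nonneg lam t), norm_of_nonneg (exp_pos _).le, mul_assoc,
    ← Real.exp_add]
  convert heatTrace_le_mul_exp hlam hsum ht using 3
  ring

theorem heatTrace_locallyIntegrableOn (hlam : ∀ n, 0 ≤ lam n)
    (hsum : ∀ t, 0 < t → Summable fun n => Real.exp (-t * lam n)) :
    LocallyIntegrableOn (heatTrace lam) (Ioi 0) :=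
  (locallyIntegrableOn_iff isOpen_Ioi.isLocallyClosed).2 fun _ hk hkc =>
    ((heatTrace_antitoneOn hlam hsum).mono hk).integrableOn_isCompact hkc

theorem mellin_heatTrace (hlam : ∀ n, 0 < lam n)
    (hsum : ∀ t, 0 < t → Summable fun n => Real.exp (-t * lam n)) {s : ℂ} (hs : 0 < s.re)
    (hζ : Summable fun n => lam n ^ (-s.re)) :
    mellin (fun t => (heatTrace lam t : ℂ)) s = Gamma s * ∑' n, (lam n : ℂ) ^ (-s) := by
  have hF : ∀ t ∈ Ioi (0 : ℝ), HasSum (fun n => 1 * (Real.exp (-lam n * t) : ℂ))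
      (heatTrace lam t) := fun t ht => by
    simpa [heatTrace, mul_comm] using (hasSum_ofReal.2 (hsum t ht).hasSum)
  have hnorm : Summable fun n => ‖(1 : ℂ)‖ / lam n ^ s.re := by
    simpa [Real.rpow_neg (hlam _).le] using hζ
  rw [← (hasSum_mellin (fun n => Or.inr (hlam n)) hs hF hnorm).tsum_eq, ← tsum_mul_left]
  simp [Complex.cpow_neg, div_eq_mul_inv]

theorem integrableOn_rpow_mul_heatTrace_of_mellinConvergent (hlam : ∀ n, 0 ≤ lam n)
    (hsum : ∀ t, 0 < t → Summable fun n => Real.exp (-t * lam n)) {σ : ℝ}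
    (hF : MellinConvergent (fun t => (heatTrace lam t : ℂ)) σ) :
    IntegrableOn (fun t => t ^ (σ - 1) * heatTrace lam t) (Ioi 0) := by
  have hmeas := continuous_ofReal.comp_aestronglyMeasurable
    (heatTrace_locallyIntegrableOn hlam hsum).aestronglyMeasurable
  refine ((mellin_convergent_iff_norm subset_rfl measurableSet_Ioi hmeas).1 hF).congr_fun
    (fun t _ => ?_) measurableSet_Ioi
  simp [norm_of_nonneg (heatTrace_nonneg lam t)]

theorem summable_rpow_neg_of_mellinConvergent (hlam : ∀ n, 0 < lam n)
    (hsum : ∀ t, 0 < t → Summable fun n => Real.exp (-t * lam n)) {σ : ℝ} (hσ : 0 < σ)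
    (hF : MellinConvergent (fun t => (heatTrace lam t : ℂ)) σ) :
    Summable fun n => lam n ^ (-σ) := by
  have hint := integrableOn_rpow_mul_heatTrace_of_mellinConvergent (fun n => (hlam n).le) hsum hF
  have hterm : ∀ n, IntegrableOn (fun t => t ^ (σ - 1) * Real.exp (-(lam n * t))) (Ioi 0) :=
    fun n => by
      simpa using integrableOn_rpow_mul_exp_neg_mul_rpow (p := 1) (by linarith) one_pos (hlam n)
  have hΓ := summable_integral_of_integrable_tsum
    (μ := volume.restrict (Ioi 0)) (f := fun n t => t ^ (σ - 1) * Real.exp (-(lam n * t)))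
    (fun n => (ae_restrict_iff' measurableSet_Ioi).2 (.of_forall fun t ht =>
      mul_nonneg (rpow_nonneg (le_of_lt ht) _) (exp_pos _).le)) hterm
    ((ae_restrict_iff' measurableSet_Ioi).2 (.of_forall fun t ht => by
      simpa [mul_comm] using (hsum t ht).mul_left (t ^ (σ - 1))))
    (hint.congr_fun (fun t _ => by simp [heatTrace, ← tsum_mul_left, mul_comm]) measurableSet_Ioi)
  simp only [integral_rpow_mul_exp_neg_mul_Ioi hσ (hlam _)] at hΓ
  refine (hΓ.mul_right (Real.Gamma σ)⁻¹).congr fun n => ?_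
  rw [mul_inv_cancel_right₀ (Real.Gamma_pos_of_pos hσ).ne', one_div, inv_rpow (hlam n).le,
    rpow_neg (hlam n).le]

end HeatTrace

def heatTraceSingularPart (C₁ C₂ C₃ : ℝ) : ℝ → ℝ :=
  (Ioc 0 1).indicator fun t => C₁ / t + C₂ / √t + C₃

section SingularPart

variable {C₁ C₂ C₃ : ℝ}

theorem heatTraceSingularPart_of_one_lt {t : ℝ} (ht : 1 < t) :
    heatTraceSingularPart C₁ C₂ C₃ t = 0 :=
  indicator_of_notMem (fun h => h.2.not_gt ht) _

theorem heatTraceSingularPart_locallyIntegrableOn :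
    LocallyIntegrableOn (heatTraceSingularPart C₁ C₂ C₃) (Ioi 0) := by
  have hcont : ContinuousOn (fun t : ℝ => C₁ / t + C₂ / √t + C₃) (Ioi 0) := by
    refine ContinuousOn.add (ContinuousOn.add ?_ ?_) continuousOn_const
    · exact continuousOn_const.div continuousOn_id fun t ht => ht.ne'
    · exact continuousOn_const.div continuous_sqrt.continuousOn fun t ht => (sqrt_pos.2 ht).ne'
  refine (locallyIntegrableOn_iff isOpen_Ioi.isLocallyClosed).2 fun k hk hkc => ?_
  exact ((hcont.locallyIntegrableOn measurableSet_Ioi).integrableOn_compact_subset hk hkc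
    ).indicator measurableSet_Ioc

theorem hasMellin_heatTraceSingularPart {s : ℂ} (hs : 1 < s.re) :
    HasMellin (fun t => (heatTraceSingularPart C₁ C₂ C₃ t : ℂ)) s
      (C₁ / (s - 1) + C₂ / (s - 1 / 2) + C₃ / s) := by
  have hsum := (((hasMellin_cpow_Ioc (-1) (by simp; linarith)).const_mul C₁).add
    ((hasMellin_cpow_Ioc (-(1 / 2)) (by simp; linarith)).const_mul C₂)).add
    ((hasMellin_cpow_Ioc 0 (by simp; linarith)).const_mul C₃)
  convert hsum using 1
  · ext t
    by_cases ht : t ∈ Ioc 0 1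
    · have hsqrt : (t : ℂ) ^ (-(1 / 2) : ℂ) = ((√t)⁻¹ : ℝ) := by
        rw [sqrt_eq_rpow, ← rpow_neg ht.1.le, ofReal_cpow ht.1.le]
        push_cast
        ring_nf
      simp only [heatTraceSingularPart, indicator_of_mem ht, cpow_neg_one, hsqrt, cpow_zero]
      push_cast
      ring
    · simp [heatTraceSingularPart, ht]
  · ring

end SingularPart

def heatTraceRemainder (lam : ℕ → ℝ) (C₁ C₂ C₃ : ℝ) (t : ℝ) : ℝ :=
  heatTrace lam t - heatTraceSingularPart C₁ C₂ C₃ t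

section Remainder

variable {lam : ℕ → ℝ} {C₁ C₂ C₃ : ℝ}

theorem heatTraceRemainder_locallyIntegrableOn (hlam : ∀ n, 0 ≤ lam n)
    (hsum : ∀ t, 0 < t → Summable fun n => Real.exp (-t * lam n)) :
    LocallyIntegrableOn (fun t => (heatTraceRemainder lam C₁ C₂ C₃ t : ℂ)) (Ioi 0) :=
  LocallyIntegrableOn.ofReal <|
    (heatTrace_locallyIntegrableOn hlam hsum).sub heatTraceSingularPart_locallyIntegrableOn

theorem heatTraceRemainder_isBigO_atTop {δ : ℝ} (hlam : ∀ n, δ ≤ lam n)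
    (hsum : Summable fun n => Real.exp (-1 * lam n)) :
    (fun t => (heatTraceRemainder lam C₁ C₂ C₃ t : ℂ)) =O[atTop] fun t => Real.exp (-δ * t) := by
  refine isBigO_ofReal_left.2 ((heatTrace_isBigO_atTop hlam hsum).congr' ?_ .rfl)
  filter_upwards [eventually_gt_atTop 1] with t ht
  simp [heatTraceRemainder, heatTraceSingularPart_of_one_lt ht]

theorem heatTraceRemainder_isBigO_nhdsGT {M : ℝ}
    (hexp : ∀ t ∈ Ioc (0 : ℝ) 1, |heatTrace lam t - C₁ / t - C₂ / √t - C₃| ≤ M * √t) :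
    (fun t => (heatTraceRemainder lam C₁ C₂ C₃ t : ℂ)) =O[𝓝[>] 0] fun t => t ^ (1 / 2 : ℝ) := by
  refine isBigO_ofReal_left.2 (IsBigO.of_bound M ?_)
  filter_upwards [Ioc_mem_nhdsGT one_pos] with t ht
  rw [norm_of_nonneg (rpow_nonneg ht.1.le _), ← sqrt_eq_rpow, Real.norm_eq_abs,
    heatTraceRemainder, heatTraceSingularPart, indicator_of_mem ht]
  convert hexp t ht using 2
  ring

theorem mellinConvergent_heatTrace_of_remainder {s : ℂ}
    (hR : MellinConvergent (fun t => (heatTraceRemainder lam C₁ C₂ C₃ t : ℂ)) s) (hs : 1 < s.re) :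
    MellinConvergent (fun t => (heatTrace lam t : ℂ)) s := by
  convert (hasMellin_add hR (hasMellin_heatTraceSingularPart (C₁ := C₁) (C₂ := C₂)
    (C₃ := C₃) hs).1).1 using 2 with t
  simp [heatTraceRemainder]

theorem mellin_heatTraceRemainder {s : ℂ}
    (hR : MellinConvergent (fun t => (heatTraceRemainder lam C₁ C₂ C₃ t : ℂ)) s) (hs : 1 < s.re) :
    mellin (fun t => (heatTraceRemainder lam C₁ C₂ C₃ t : ℂ)) s =
      mellin (fun t => (heatTrace lam t : ℂ)) s - (C₁ / (s - 1) + C₂ / (s - 1 / 2) + C₃ / s) := by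
  have hE := hasMellin_heatTraceSingularPart (C₁ := C₁) (C₂ := C₂) (C₃ := C₃) hs
  rw [← hE.2, ← (hasMellin_sub (mellinConvergent_heatTrace_of_remainder hR hs) hE.1).2]
  simp [heatTraceRemainder]

end Remainder

def spectralZetaContinuation (lam : ℕ → ℝ) (C₁ C₂ C₃ : ℝ) (s : ℂ) : ℂ :=
  (mellin (fun t => (heatTraceRemainder lam C₁ C₂ C₃ t : ℂ)) s + C₁ / (s - 1) + C₂ / (s - 1 / 2))
    * (Gamma s)⁻¹ + C₃ * (Gamma (s + 1))⁻¹

section Continuation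

variable {lam : ℕ → ℝ} {C₁ C₂ C₃ : ℝ}

-- `(Gamma 0)⁻¹ = 0` is the genuine value of the entire function `1 / Γ` at `0`.
theorem spectralZetaContinuation_zero : spectralZetaContinuation lam C₁ C₂ C₃ 0 = C₃ := by
  simp [spectralZetaContinuation]

theorem differentiableAt_spectralZetaContinuation {s : ℂ}
    (hR : DifferentiableAt ℂ (mellin fun t => (heatTraceRemainder lam C₁ C₂ C₃ t : ℂ)) s)
    (hs₁ : s ≠ 1) (hs₂ : s ≠ 1 / 2) :
    DifferentiableAt ℂ (spectralZetaContinuation lam C₁ C₂ C₃) s := by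
  unfold spectralZetaContinuation
  have hΓ₀ : DifferentiableAt ℂ (fun s : ℂ => (Gamma s)⁻¹) s := differentiable_one_div_Gamma s
  have hΓ₁ : DifferentiableAt ℂ (fun s : ℂ => (Gamma (s + 1))⁻¹) s :=
    differentiable_one_div_Gamma.comp (differentiable_id.add_const 1) s
  have hs₁' : s - 1 ≠ 0 := sub_ne_zero.2 hs₁
  have hs₂' : s - 1 / 2 ≠ 0 := sub_ne_zero.2 hs₂
  fun_prop (disch := assumption)

theorem spectralZetaContinuation_eq {s Z : ℂ} (hs : 1 < s.re)
    (hR : MellinConvergent (fun t => (heatTraceRemainder lam C₁ C₂ C₃ t : ℂ)) s)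
    (hF : mellin (fun t => (heatTrace lam t : ℂ)) s = Gamma s * Z) :
    spectralZetaContinuation lam C₁ C₂ C₃ s = Z := by
  have hs₀ : s ≠ 0 := by rintro rfl; simp at hs; linarith
  have hΓ : Gamma s ≠ 0 := Gamma_ne_zero_of_re_pos (by linarith)
  rw [spectralZetaContinuation, mellin_heatTraceRemainder hR hs, hF, Gamma_add_one s hs₀]
  field_simp
  ring

end Continuation

end

/-- If `λ_n ≥ δ > 0`, the heat trace `F(t) = ∑ₙ e^{-t λₙ}` is finite for all
`t > 0` and admits a short-time expansion `F(t) = C₁/t + C₂ t^{-1/2} + C₃ + O(t^{1/2})` on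
`(0,1]`, then the spectral zeta series `∑ₙ λₙ^{-s}` converges for `Re s > 1` and extends to
a function `G` differentiable on `{Re s > -1/2} \ {1/2, 1}` with `G(0) = C₃`; in particular
the height `-G'(0)` is well defined. -/
theorem heat_trace_zeta_continuation (δ : ℝ) (hδ : 0 < δ) (lam : ℕ → ℝ)
    (hlam : ∀ n, δ ≤ lam n)
    (hsum : ∀ t : ℝ, 0 < t → Summable (fun n : ℕ => Real.exp (-t * lam n)))
    (C₁ C₂ C₃ M : ℝ)
    (hexp : ∀ t : ℝ, t ∈ Set.Ioc (0 : ℝ) 1 →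
      |(∑' n : ℕ, Real.exp (-t * lam n)) - C₁ / t - C₂ / Real.sqrt t - C₃|
        ≤ M * Real.sqrt t) :
    (∀ s : ℂ, 1 < s.re → Summable (fun n : ℕ => ((lam n : ℂ)) ^ (-s))) ∧
    ∃ G : ℂ → ℂ,
      (∀ s : ℂ, -1 / 2 < s.re → s ≠ 1 / 2 → s ≠ 1 → DifferentiableAt ℂ G s) ∧
      (∀ s : ℂ, 1 < s.re → G s = ∑' n : ℕ, ((lam n : ℂ)) ^ (-s)) ∧
      G 0 = (C₃ : ℂ) := by
  have hpos : ∀ n, 0 < lam n := fun n => hδ.trans_le (hlam n)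
  have hloc := heatTraceRemainder_locallyIntegrableOn (C₁ := C₁) (C₂ := C₂) (C₃ := C₃)
    (fun n => (hpos n).le) hsum
  have htop := heatTraceRemainder_isBigO_atTop (C₁ := C₁) (C₂ := C₂) (C₃ := C₃) hlam
    (hsum 1 one_pos)
  have hbot : (fun t => (heatTraceRemainder lam C₁ C₂ C₃ t : ℂ)) =O[𝓝[>] 0]
      fun t : ℝ => t ^ (-(-(1 / 2)) : ℝ) := by
    rw [neg_neg]
    exact heatTraceRemainder_isBigO_nhdsGT hexp
  have hR : ∀ s : ℂ, -(1 / 2) < s.re → MellinConvergent _ s := fun s hs =>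
    mellinConvergent_of_isBigO_rpow_exp hδ hloc htop hbot hs
  have hζ : ∀ s : ℂ, 1 < s.re → Summable fun n => lam n ^ (-s.re) := fun s hs =>
    summable_rpow_neg_of_mellinConvergent hpos hsum (by linarith)
      (mellinConvergent_heatTrace_of_remainder (hR s.re (by simp; linarith)) (by simpa))
  refine ⟨fun s hs => .of_norm ((hζ s hs).congr fun n => ?_),
    spectralZetaContinuation lam C₁ C₂ C₃, fun s hs hs₂ hs₁ => ?_, fun s hs => ?_,
    spectralZetaContinuation_zero⟩
  · rw [norm_cpow_eq_rpow_re_of_pos (hpos n), neg_re]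
  · exact differentiableAt_spectralZetaContinuation
      (mellin_differentiableAt_of_isBigO_rpow_exp hδ hloc htop hbot (by linarith)) hs₁ hs₂
  · exact spectralZetaContinuation_eq hs (hR s (by linarith))
      (mellin_heatTrace hpos hsum (by linarith) (hζ s hs))
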